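/- Let M be a semiumbilical immersed surface in ℝ⁴, let (t₁,t₂) be a local orthonormal frame of TM satisfying α(t₁,t₂) = 0, put b₁ = α(t₁,t₁) and b₂ = α(t₂,t₂), and let c be the normal section satisfying c·α = g. Then ⟨b₁, ∇^⊥_{t₂} c⟩ = 0 and ⟨b₂, ∇^⊥_{t₁} c⟩ = 0. -/

import Mathlib

/- Local framework: an immersed surface in ℝⁿ is given by a smooth parametrization
`ψ : Pl → Amb n` (`Pl = ℝ²` the parameter domain) whose differential is everywhere
injective.  Tangent/normal spaces, fundamental forms, connections, curvature ellipse,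
(semi)umbilic and inflection points, flatness, etc. are defined from `ψ`. -/

noncomputable section
open scoped RealInnerProductSpace

/-- The parameter plane ℝ². -/
abbrev Pl := EuclideanSpace ℝ (Fin 2)
/-- Ambient Euclidean space ℝⁿ. -/
abbrev Amb (n : ℕ) := EuclideanSpace ℝ (Fin n)

/-- `ψ` is a smooth immersion. -/
def Immersion {n : ℕ} (ψ : Pl → Amb n) : Prop :=
  ContDiff ℝ (⊤ : ℕ∞) ψ ∧ ∀ q, Function.Injective (fderiv ℝ ψ q)

/-- Tangent plane `T_pM` (as a linear subspace of the ambient space) at the point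
with parameter `q`. -/
def Tang {n : ℕ} (ψ : Pl → Amb n) (q : Pl) : Submodule ℝ (Amb n) :=
  LinearMap.range (fderiv ℝ ψ q : Pl →ₗ[ℝ] Amb n)

/-- Normal space `N_pM = (T_pM)ᗮ`. -/
def Nor {n : ℕ} (ψ : Pl → Amb n) (q : Pl) : Submodule ℝ (Amb n) :=
  (Tang ψ q)ᗮ

/-- Tangential part `X ↦ X^⊤` of an ambient vector. -/
def tproj {n : ℕ} (ψ : Pl → Amb n) (q : Pl) (x : Amb n) : Amb n :=
  ((Tang ψ q).orthogonalProjectionOnto x : Amb n)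

/-- Normal part `X ↦ X^⊥` of an ambient vector. -/
def nproj {n : ℕ} (ψ : Pl → Amb n) (q : Pl) (x : Amb n) : Amb n :=
  x - tproj ψ q x

/-- The second fundamental form `α` at the point of parameter `q`, evaluated on the
tangent vectors `dψ_q v`, `dψ_q w` (for parameter directions `v w : Pl`):
`α(dψ v, dψ w) = (D_{dψ v} (dψ w))^⊥ = (∂_v ∂_w ψ)^⊥`. -/
def sff {n : ℕ} (ψ : Pl → Amb n) (q : Pl) (v w : Pl) : Amb n :=
  nproj ψ q (fderiv ℝ (fun x => fderiv ℝ ψ x w) q v)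

/-- The curvature ellipse at `q`: image of `η(t) = α(t,t)` over the unit tangent
vectors `t = dψ_q v`. -/
def Ellipse {n : ℕ} (ψ : Pl → Amb n) (q : Pl) : Set (Amb n) :=
  {z | ∃ v : Pl, ‖fderiv ℝ ψ q v‖ = 1 ∧ z = sff ψ q v v}

/-- `q` is an umbilic point: the curvature ellipse degenerates to a point. -/
def Umbilic {n : ℕ} (ψ : Pl → Amb n) (q : Pl) : Prop :=
  ∃ a : Amb n, Ellipse ψ q = {a}

/-- `q` is a semiumbilic point: the curvature ellipse lies in an affine line. -/
def Semiumbilic {n : ℕ} (ψ : Pl → Amb n) (q : Pl) : Prop :=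
  ∃ a b : Amb n, Ellipse ψ q ⊆ {x | ∃ s : ℝ, x = a + s • b}

/-- `q` is a point of inflection: the curvature ellipse lies in a line through the
origin of the normal space. -/
def Inflection {n : ℕ} (ψ : Pl → Amb n) (q : Pl) : Prop :=
  ∃ b : Amb n, Ellipse ψ q ⊆ {x | ∃ s : ℝ, x = s • b}

/-- The surface is semiumbilical: every point is semiumbilic and not of inflection. -/
def Semiumbilical {n : ℕ} (ψ : Pl → Amb n) : Prop :=
  ∀ q, Semiumbilic ψ q ∧ ¬ Inflection ψ q

/-- A smooth ambient-valued field which is everywhere tangent. -/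
def TangentField {n : ℕ} (ψ : Pl → Amb n) (F : Pl → Amb n) : Prop :=
  ContDiff ℝ (⊤ : ℕ∞) F ∧ ∀ q, F q ∈ Tang ψ q

/-- A smooth ambient-valued field which is everywhere normal (a section of `NM`). -/
def NormalField {n : ℕ} (ψ : Pl → Amb n) (F : Pl → Amb n) : Prop :=
  ContDiff ℝ (⊤ : ℕ∞) F ∧ ∀ q, F q ∈ Nor ψ q

/-- The tangent covariant derivative `∇^⊤ F = (D F)^⊤` of an ambient field `F`
along the `i`-th coordinate direction of the parameter plane. -/
def covT {n : ℕ} (ψ : Pl → Amb n) (F : Pl → Amb n) (i : Fin 2) (q : Pl) : Amb n :=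
  tproj ψ q (fderiv ℝ F q (EuclideanSpace.single i (1:ℝ)))

/-- The tangent connection `∇^⊤` is flat: its curvature `R(∂₁,∂₂)` annihilates every
smooth tangent field (by tensoriality of the curvature this means `R = 0`, since the
coordinate fields `∂₁, ∂₂` commute and span). -/
def FlatSurface {n : ℕ} (ψ : Pl → Amb n) : Prop :=
  ∀ F : Pl → Amb n, TangentField ψ F →
    ∀ q, covT ψ (covT ψ F 1) 0 q = covT ψ (covT ψ F 0) 1 q

/-- A tangent field is parallel: `∇^⊤ Y = (D Y)^⊤ = 0` in every tangent direction. -/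
def ParallelT {n : ℕ} (ψ : Pl → Amb n) (F : Pl → Amb n) : Prop :=
  ∀ q (v : Pl), tproj ψ q (fderiv ℝ F q v) = 0

/-- A normal section is parallel: `∇^⊥ u = (D u)^⊥ = 0` in every tangent direction. -/
def ParallelN {n : ℕ} (ψ : Pl → Amb n) (F : Pl → Amb n) : Prop :=
  ∀ q (v : Pl), nproj ψ q (fderiv ℝ F q v) = 0

/-- `c · α = g`: the normal section `c` satisfies `⟨c, α(X,Y)⟩ = ⟨X,Y⟩` for all
tangent vectors `X = dψ v`, `Y = dψ w`. -/
def CAG {n : ℕ} (ψ : Pl → Amb n) (c : Pl → Amb n) : Prop :=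
  ∀ q (v w : Pl), (⟪c q, sff ψ q v w⟫) = ⟪fderiv ℝ ψ q v, fderiv ℝ ψ q w⟫

/-- `e` is a tangent field with `∇^⊤_X e = X` for every tangent vector `X = dψ v`. -/
def EulerField {n : ℕ} (ψ : Pl → Amb n) (e : Pl → Amb n) : Prop :=
  TangentField ψ e ∧ ∀ q (v : Pl), tproj ψ q (fderiv ℝ e q v) = fderiv ℝ ψ q v

/-- `j` is the tangent field `½ grad⟨c,c⟩` (gradient with respect to the first
fundamental form): `⟨2 j, dψ v⟩ = d⟨c,c⟩(dψ v)` for every direction `v`. -/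
def HalfGradCSq {n : ℕ} (ψ : Pl → Amb n) (c j : Pl → Amb n) : Prop :=
  TangentField ψ j ∧
    ∀ q (v : Pl), 2 * (⟪j q, fderiv ℝ ψ q v⟫) = fderiv ℝ (fun x => (⟪c x, c x⟫ : ℝ)) q v

/-- `k` is a normal section with `(D_X (e - k))^⊥ = 0` for all tangent `X`. -/
def KField {n : ℕ} (ψ : Pl → Amb n) (e k : Pl → Amb n) : Prop :=
  NormalField ψ k ∧ ∀ q (v : Pl), nproj ψ q (fderiv ℝ (fun x => e x - k x) q v) = 0

/-- `dψ_q v` is a (unit) asymptotic direction at `q`: `η(t) = α(t,t)` is an endpoint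
(extreme point) of the segment into which the curvature ellipse degenerates. -/
def IsAsymptotic {n : ℕ} (ψ : Pl → Amb n) (q : Pl) (v : Pl) : Prop :=
  ‖fderiv ℝ ψ q v‖ = 1 ∧ sff ψ q v v ∈ Set.extremePoints ℝ (Ellipse ψ q)

/-! Differentiating `⟪c, dψ w⟫ = 0` and using `c · α = g` shows `(D_v c)^⊤ = -dψ v`, so
`D(c + ψ)` is normal and equals `∇^⊥ c`. Differentiating `⟪D_v (c + ψ), dψ w⟫ = 0` once more
gives `⟪∇^⊥_v c, α(u, w)⟫ = -⟪D_u D_v (c + ψ), dψ w⟫`, which is symmetric in `u, v` by the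
symmetry of second derivatives. Hence `⟪b₁, ∇^⊥_{t₂} c⟫ = ⟪∇^⊥_{t₁} c, α(t₂, t₁)⟫ = 0`, and
likewise for `b₂`. -/

section Calculus

variable {E F : Type*} [NormedAddCommGroup E] [NormedSpace ℝ E]

theorem inner_fderiv_add_inner_fderiv_of_inner_eq_zero [NormedAddCommGroup F]
    [InnerProductSpace ℝ F] {f g : E → F} {x : E} (hf : DifferentiableAt ℝ f x)
    (hg : DifferentiableAt ℝ g x) (hfg : ∀ y, ⟪f y, g y⟫ = 0) (v : E) :
    ⟪fderiv ℝ f x v, g x⟫ + ⟪f x, fderiv ℝ g x v⟫ = 0 := by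
  have h := fderiv_inner_apply ℝ hf hg v
  rw [show (fun y => ⟪f y, g y⟫) = fun _ => (0 : ℝ) from funext hfg, fderiv_fun_const] at h
  rw [add_comm, ← h, Pi.zero_apply, zero_apply]

variable [NormedAddCommGroup F] [NormedSpace ℝ F]

theorem ContDiff.differentiable_fderiv_apply {f : E → F} (hf : ContDiff ℝ 2 f) (v : E) :
    Differentiable ℝ (fun y => fderiv ℝ f y v) :=
  ((hf.fderiv_right (m := 1) (by norm_num)).clm_apply contDiff_const).differentiable
    (by norm_num)

theorem ContDiff.fderiv_fderiv_apply_comm {f : E → F} (hf : ContDiff ℝ 2 f) (x u v : E) :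
    fderiv ℝ (fun y => fderiv ℝ f y v) x u = fderiv ℝ (fun y => fderiv ℝ f y u) x v := by
  have hf' : Differentiable ℝ (fderiv ℝ f) :=
    (hf.fderiv_right (m := 1) (by norm_num)).differentiable (by norm_num)
  simp only [fderiv_clm_apply (hf' x) (differentiableAt_const _), fderiv_fun_const,
    Pi.zero_apply, ContinuousLinearMap.comp_zero, zero_add, ContinuousLinearMap.flip_apply]
  exact hf.contDiffAt.isSymmSndFDerivAt (by simp [minSmoothness_of_isRCLikeNormedField]) u v

end Calculus

section Surface

variable {n : ℕ} {ψ c : Pl → Amb n} {q : Pl}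

theorem nproj_sub_eq {z t : Amb n} (hz : z ∈ Nor ψ q) (ht : t ∈ Tang ψ q) :
    nproj ψ q (z - t) = z := by
  show z - t - (Tang ψ q).starProjection (z - t) = z
  rw [map_sub, (Submodule.starProjection_apply_eq_zero_iff _).2 hz,
    Submodule.starProjection_eq_self_iff.2 ht]
  abel

theorem inner_sff_eq_of_mem_nor {z : Amb n} (hz : z ∈ Nor ψ q) (u w : Pl) :
    ⟪z, sff ψ q u w⟫ = ⟪z, fderiv ℝ (fun x => fderiv ℝ ψ x w) q u⟫ := by
  rw [sff, nproj, tproj, inner_sub_right,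
    Submodule.inner_left_of_mem_orthogonal (Submodule.coe_mem _) hz, sub_zero]

theorem sff_comm (hψ : ContDiff ℝ 2 ψ) (u w : Pl) : sff ψ q u w = sff ψ q w u := by
  rw [sff, sff, hψ.fderiv_fderiv_apply_comm]

variable (hψ : ContDiff ℝ 2 ψ) (hc : ContDiff ℝ 2 c) (hcn : ∀ x, c x ∈ Nor ψ x)
  (hcg : CAG ψ c)
include hψ hc hcn hcg

theorem fderiv_add_mem_nor (v : Pl) : fderiv ℝ (c + ψ) q v ∈ Nor ψ q := by
  refine (Submodule.mem_orthogonal _ _).2 ?_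
  rintro _ ⟨w, rfl⟩
  have h := inner_fderiv_add_inner_fderiv_of_inner_eq_zero (hc.differentiable (by norm_num) q)
    (hψ.differentiable_fderiv_apply w q)
    (fun x => Submodule.inner_left_of_mem_orthogonal (LinearMap.mem_range_self _ w) (hcn x)) v
  rw [← inner_sff_eq_of_mem_nor (hcn q), hcg] at h
  change ⟪fderiv ℝ ψ q w, _⟫ = 0
  rw [fderiv_add (hc.differentiable (by norm_num) q) (hψ.differentiable (by norm_num) q),
    add_apply, inner_add_right, real_inner_comm (fderiv ℝ c q v),
    real_inner_comm (fderiv ℝ ψ q v), h]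

theorem nproj_fderiv_eq (v : Pl) : nproj ψ q (fderiv ℝ c q v) = fderiv ℝ (c + ψ) q v := by
  rw [← nproj_sub_eq (fderiv_add_mem_nor hψ hc hcn hcg v) (LinearMap.mem_range_self _ v),
    fderiv_add (hc.differentiable (by norm_num) q) (hψ.differentiable (by norm_num) q)]
  simp

theorem inner_nproj_fderiv_sff_comm (u v w : Pl) :
    ⟪nproj ψ q (fderiv ℝ c q v), sff ψ q u w⟫ = ⟪nproj ψ q (fderiv ℝ c q u), sff ψ q v w⟫ := by
  have hf : ContDiff ℝ 2 (c + ψ) := hc.add hψ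
  have hform : ∀ a b, ⟪nproj ψ q (fderiv ℝ c q b), sff ψ q a w⟫ =
      -⟪fderiv ℝ (fun x => fderiv ℝ (c + ψ) x b) q a, fderiv ℝ ψ q w⟫ := fun a b => by
    rw [nproj_fderiv_eq hψ hc hcn hcg,
      inner_sff_eq_of_mem_nor (fderiv_add_mem_nor hψ hc hcn hcg b)]
    exact eq_neg_of_add_eq_zero_right <| inner_fderiv_add_inner_fderiv_of_inner_eq_zero
      (hf.differentiable_fderiv_apply b q) (hψ.differentiable_fderiv_apply w q)
      (fun x => Submodule.inner_left_of_mem_orthogonal (LinearMap.mem_range_self _ w)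
        (fderiv_add_mem_nor hψ hc hcn hcg b)) a
  rw [hform, hform, hf.fderiv_fderiv_apply_comm]

end Surface

theorem statement_3_general (ψ : Pl → Amb 4) (hψ : Immersion ψ)
    (T₁ T₂ : Pl → Pl)
    (hb₃ : ∀ q, sff ψ q (T₁ q) (T₂ q) = 0)
    (c : Pl → Amb 4) (hc : NormalField ψ c) (hcg : CAG ψ c) :
    ∀ q, (⟪sff ψ q (T₁ q) (T₁ q), nproj ψ q (fderiv ℝ c q (T₂ q))⟫ : ℝ) = 0 ∧
         (⟪sff ψ q (T₂ q) (T₂ q), nproj ψ q (fderiv ℝ c q (T₁ q))⟫ : ℝ) = 0 := by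
  have hψ₂ : ContDiff ℝ 2 ψ := hψ.1.of_le (WithTop.coe_le_coe.2 le_top)
  have hc₂ : ContDiff ℝ 2 c := hc.1.of_le (WithTop.coe_le_coe.2 le_top)
  refine fun q => ⟨?_, ?_⟩
  · rw [real_inner_comm, inner_nproj_fderiv_sff_comm hψ₂ hc₂ hc.2 hcg, sff_comm hψ₂, hb₃,
      inner_zero_right]
  · rw [real_inner_comm, inner_nproj_fderiv_sff_comm hψ₂ hc₂ hc.2 hcg, hb₃, inner_zero_right]

/-- On a semiumbilical surface in ℝ⁴ with an orthonormal frame `(t₁,t₂)`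
with `α(t₁,t₂) = 0`, `b₁ = α(t₁,t₁)`, `b₂ = α(t₂,t₂)`, and `c` the normal section with
`c·α = g`, one has `⟨b₁, ∇^⊥_{t₂} c⟩ = 0` and `⟨b₂, ∇^⊥_{t₁} c⟩ = 0`. -/
theorem statement_3 (ψ : Pl → Amb 4) (hψ : Immersion ψ) (hsem : Semiumbilical ψ)
    (T₁ T₂ : Pl → Pl)
    (hT₁s : ContDiff ℝ (⊤ : ℕ∞) T₁) (hT₂s : ContDiff ℝ (⊤ : ℕ∞) T₂)
    (hT₁ : ∀ q, ‖fderiv ℝ ψ q (T₁ q)‖ = 1) (hT₂ : ∀ q, ‖fderiv ℝ ψ q (T₂ q)‖ = 1)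
    (hT₁₂ : ∀ q, ⟪fderiv ℝ ψ q (T₁ q), fderiv ℝ ψ q (T₂ q)⟫ = 0)
    (hb₃ : ∀ q, sff ψ q (T₁ q) (T₂ q) = 0)
    (c : Pl → Amb 4) (hc : NormalField ψ c) (hcg : CAG ψ c) :
    ∀ q, (⟪sff ψ q (T₁ q) (T₁ q), nproj ψ q (fderiv ℝ c q (T₂ q))⟫ : ℝ) = 0 ∧
         (⟪sff ψ q (T₂ q) (T₂ q), nproj ψ q (fderiv ℝ c q (T₁ q))⟫ : ℝ) = 0 :=
  statement_3_general ψ hψ T₁ T₂ hb₃ c hc hcg
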